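/- arXiv:1002.4070 — 2 statements merged into one kernel-verified Lean document; each statement's English description precedes it below -/
import Mathlib

section
/- Let φ, ψ : ℝ → ℝ with φ twice differentiable, and define g : ℝ² → ℝ by g(s, t) = s² − (t − φ(s))². Then along the curve t = φ(s) + ψ(s), the quantity C(g) = g_ss·(g_t)² − 2·g_st·g_s·g_t + g_tt·(g_s)² satisfies C(g)(s, φ(s) + ψ(s)) = 8·(ψ(s)² + ψ(s)³·φ''(s) − s²) for every s ∈ ℝ. -/
/-! With `u = t - φ s`, so that `g = s² - u²`: `g_s = 2s + 2uφ'`, `g_t = -2u`,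
`g_ss = 2 - 2φ'² + 2uφ''`, `g_st = 2φ'`, `g_tt = -2`. In `C(g)` every term with `φ'` cancels,
leaving `C(g) = 8(u² + u³φ'' - s²)` at every point; on the curve, `u = ψ s`. -/

/-- First partial derivative of `F : ℝ × ℝ → ℝ` in the first variable `s`. -/
noncomputable def pdS (F : ℝ × ℝ → ℝ) (p : ℝ × ℝ) : ℝ :=
  deriv (fun s => F (s, p.2)) p.1

/-- First partial derivative of `F : ℝ × ℝ → ℝ` in the second variable `t`. -/
noncomputable def pdT (F : ℝ × ℝ → ℝ) (p : ℝ × ℝ) : ℝ :=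
  deriv (fun t => F (p.1, t)) p.2

/-- The level-curve curvature numerator
`C(g) = g_ss·(g_t)² − 2·g_st·g_s·g_t + g_tt·(g_s)²`. -/
noncomputable def Cexpr (F : ℝ × ℝ → ℝ) (p : ℝ × ℝ) : ℝ :=
  pdS (pdS F) p * (pdT F p) ^ 2 - 2 * pdT (pdS F) p * pdS F p * pdT F p +
    pdT (pdT F) p * (pdS F p) ^ 2

noncomputable def shearedHyperbola (φ : ℝ → ℝ) (q : ℝ × ℝ) : ℝ :=
  q.1 ^ 2 - (q.2 - φ q.1) ^ 2

section

variable {φ : ℝ → ℝ}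

theorem pdS_shearedHyperbola (hφ : Differentiable ℝ φ) :
    pdS (shearedHyperbola φ) = fun p => 2 * p.1 + 2 * (p.2 - φ p.1) * deriv φ p.1 := by
  funext p
  have h := (hasDerivAt_pow 2 p.1).sub
    (((hasDerivAt_const p.1 p.2).sub (hφ p.1).hasDerivAt).pow 2)
  refine (h.congr_deriv ?_).deriv
  simp only [Pi.sub_apply, Nat.cast_ofNat]
  ring

theorem pdT_shearedHyperbola : pdT (shearedHyperbola φ) = fun p => -2 * (p.2 - φ p.1) := by
  funext p
  have h := (hasDerivAt_const p.2 (p.1 ^ 2)).sub (((hasDerivAt_id p.2).sub_const (φ p.1)).pow 2)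
  refine (h.congr_deriv ?_).deriv
  simp only [id, Nat.cast_ofNat]
  ring

theorem pdS_pdS_shearedHyperbola (hφ : Differentiable ℝ φ) {p : ℝ × ℝ}
    (hφ' : DifferentiableAt ℝ (deriv φ) p.1) :
    pdS (pdS (shearedHyperbola φ)) p =
      2 - 2 * deriv φ p.1 ^ 2 + 2 * (p.2 - φ p.1) * deriv (deriv φ) p.1 := by
  rw [pdS_shearedHyperbola hφ]
  have h := ((hasDerivAt_id p.1).const_mul 2).add
    ((((hasDerivAt_const p.1 p.2).sub (hφ p.1).hasDerivAt).const_mul 2).mul hφ'.hasDerivAt)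
  refine (h.congr_deriv ?_).deriv
  simp only [Pi.sub_apply]
  ring

theorem pdT_pdS_shearedHyperbola (hφ : Differentiable ℝ φ) (p : ℝ × ℝ) :
    pdT (pdS (shearedHyperbola φ)) p = 2 * deriv φ p.1 := by
  rw [pdS_shearedHyperbola hφ]
  have h := (hasDerivAt_const p.2 (2 * p.1)).add
    ((((hasDerivAt_id p.2).sub_const (φ p.1)).const_mul 2).mul_const (deriv φ p.1))
  refine (h.congr_deriv ?_).deriv
  ring

theorem pdT_pdT_shearedHyperbola (p : ℝ × ℝ) : pdT (pdT (shearedHyperbola φ)) p = -2 := by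
  rw [pdT_shearedHyperbola]
  have h := (((hasDerivAt_id p.2).sub_const (φ p.1)).const_mul (-2 : ℝ))
  refine (h.congr_deriv ?_).deriv
  ring

theorem Cexpr_shearedHyperbola (hφ : Differentiable ℝ φ) {p : ℝ × ℝ}
    (hφ' : DifferentiableAt ℝ (deriv φ) p.1) :
    Cexpr (shearedHyperbola φ) p =
      8 * ((p.2 - φ p.1) ^ 2 + (p.2 - φ p.1) ^ 3 * deriv (deriv φ) p.1 - p.1 ^ 2) := by
  rw [Cexpr, pdS_pdS_shearedHyperbola hφ hφ', pdT_pdS_shearedHyperbola hφ,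
    pdT_pdT_shearedHyperbola, pdS_shearedHyperbola hφ, pdT_shearedHyperbola]
  ring

end

/-- For `g(s,t) = s² − (t − φ(s))²` with `φ` twice differentiable, along the
curve `t = φ(s) + ψ(s)` one has
`C(g)(s, φ(s) + ψ(s)) = 8·(ψ(s)² + ψ(s)³·φ''(s) − s²)`. -/
theorem Cexpr_along_shifted_curve (φ ψ : ℝ → ℝ)
    (hφ : ∀ s, DifferentiableAt ℝ φ s)
    (hφ' : ∀ s, DifferentiableAt ℝ (deriv φ) s) :
    ∀ s : ℝ,
      Cexpr (fun q => q.1 ^ 2 - (q.2 - φ q.1) ^ 2) (s, φ s + ψ s) =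
        8 * ((ψ s) ^ 2 + (ψ s) ^ 3 * deriv (deriv φ) s - s ^ 2) := by
  intro s
  have h := Cexpr_shearedHyperbola hφ (p := (s, φ s + ψ s)) (hφ' s)
  rwa [add_sub_cancel_left] at h
end

section
/- Let C ⊂ ℂ be a smooth simple closed curve (the image of an injective C¹ map of the circle with nowhere-vanishing derivative), and let a, b, c ∈ ℂ be three pairwise distinct non-collinear points. Then there exist three pairwise distinct points a', b', c' ∈ C such that (c' − a')/(b' − a') = (c − a)/(b − a); that is, the triangle a'b'c' inscribed in C is directly similar to the triangle abc. -/
/-!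
After an affine normalisation `γ 0 = 0`, `γ' 0 = 1`, and with `w = (c - a) / (b - a)` of positive
imaginary part (otherwise use `w⁻¹` and swap `b'`, `c'`), it suffices to find `τ` with
`γ τ ≠ 0` and `w * γ τ` on the curve. If there were none, the winding integral
`W μ = ∫ γ' / (γ - μ)` at `μ = w * γ τ` would be a continuous `2πiℤ`-valued function of
`τ ∈ (0, 1)`, hence constant, and by periodicity `W (w * γ t) = W (w * γ (-t))`. But these points
tend to `γ 0` from opposite sides of the curve, across which `W` jumps by `2πi`: near `s = 0` the
curve stays in a thin cone around the real axis that `w * γ (±t)` avoid, so there the integrand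
is the derivative of a branch of `log (± I * (γ s - μ))`, while the rest of the integral is
continuous in `μ`.
-/

open Set Filter Topology Complex intervalIntegral
open scoped Real

noncomputable def windingIntegral (γ : ℝ → ℂ) (a b : ℝ) (p : ℂ) : ℂ :=
  ∫ s in a..b, deriv γ s / (γ s - p)

lemma intervalIntegrable_deriv_div_sub {γ : ℝ → ℂ} (hγ : ContDiff ℝ 1 γ) {a b : ℝ} {p : ℂ}
    (hp : p ∉ γ '' uIcc a b) :
    IntervalIntegrable (fun s => deriv γ s / (γ s - p)) MeasureTheory.volume a b :=
  ((hγ.continuous_deriv le_rfl).continuousOn.div (hγ.continuous.sub continuous_const).continuousOn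
    fun s hs => sub_ne_zero.2 fun h => hp ⟨s, hs, h⟩).intervalIntegrable

lemma continuousOn_integral_div_sub {g Γ : ℝ → ℂ} {a b : ℝ} (hab : a ≤ b)
    (hg : ContinuousOn g (Icc a b)) (hΓ : ContinuousOn Γ (Icc a b)) :
    ContinuousOn (fun p => ∫ s in a..b, g s / (Γ s - p)) (Γ '' Icc a b)ᶜ := by
  -- clamping `s` to `[a, b]` makes the integrand jointly continuous without changing the integral
  set clamp : ℝ → Icc a b := projIcc a b hab
  have hclamp : Continuous fun s => (clamp s : ℝ) := continuous_subtype_val.comp continuous_projIcc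
  rw [continuousOn_iff_continuous_domRestrict]
  have hf : Continuous (Function.uncurry fun (p : ((Γ '' Icc a b)ᶜ : Set ℂ)) (s : ℝ) =>
      g (clamp s) / (Γ (clamp s) - p)) := by
    refine (hg.comp_continuous (hclamp.comp continuous_snd) fun q => (clamp q.2).2).div
      ((hΓ.comp_continuous (hclamp.comp continuous_snd) fun q => (clamp q.2).2).sub
        continuous_subtype_val.fst') fun q => sub_ne_zero.2 fun h => q.1.2 ⟨_, (clamp q.2).2, h⟩
  refine (continuous_parametric_intervalIntegral_of_continuous' (μ := MeasureTheory.volume) hf a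
    b).congr fun p => integral_congr fun s hs => ?_
  rw [uIcc_of_le hab] at hs
  simp only [clamp, projIcc_of_mem hab hs]

lemma windingIntegral_mem_zmultiples {γ : ℝ → ℂ} (hγ : ContDiff ℝ 1 γ) {a b : ℝ}
    (hab : γ a = γ b) {p : ℂ} (hp : p ∉ range γ) :
    windingIntegral γ a b p ∈ AddSubgroup.zmultiples (2 * π * I) := by
  have hne : ∀ s, γ s - p ≠ 0 := fun s h => hp ⟨s, sub_eq_zero.1 h⟩
  have hγ' : ∀ s, HasDerivAt γ (deriv γ s) s :=
    fun s => (hγ.differentiable one_ne_zero s).hasDerivAt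
  have hcont : Continuous fun s => deriv γ s / (γ s - p) :=
    (hγ.continuous_deriv le_rfl).div (hγ.continuous.sub continuous_const) hne
  set G : ℝ → ℂ := fun t => ∫ s in a..t, deriv γ s / (γ s - p)
  have hG : ∀ t, HasDerivAt G (deriv γ t / (γ t - p)) t := fun t =>
    integral_hasDerivAt_right (hcont.intervalIntegrable _ _) (hcont.stronglyMeasurableAtFilter _ _)
      hcont.continuousAt
  -- `exp (-G) * (γ - p)` has derivative zero, hence is constant
  have hH : ∀ t, HasDerivAt (fun t => exp (-G t) * (γ t - p)) 0 t := by
    intro t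
    refine (((hG t).neg.cexp).mul ((hγ' t).sub_const p)).congr_deriv ?_
    simp only [Pi.neg_apply]
    field_simp [hne t]
    ring
  have hconst := is_const_of_deriv_eq_zero (fun t => (hH t).differentiableAt)
    (fun t => (hH t).deriv) a b
  have hexp : exp (G b) = 1 := by
    simp only [G, integral_same, neg_zero, exp_zero, one_mul, hab] at hconst
    have := mul_right_cancel₀ (hne b) (hconst.symm.trans (one_mul _).symm)
    rwa [← inv_eq_one, ← exp_neg]
  obtain ⟨n, hn⟩ := exp_eq_one_iff.1 hexp
  exact AddSubgroup.mem_zmultiples_iff.2 ⟨n, by rw [zsmul_eq_mul]; exact hn.symm⟩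

lemma integral_deriv_div_sub_eq_log_sub_log {γ : ℝ → ℂ} (hγ : ContDiff ℝ 1 γ) {a b : ℝ}
    {c p : ℂ} (hslit : ∀ s ∈ uIcc a b, c * (γ s - p) ∈ slitPlane) :
    ∫ s in a..b, deriv γ s / (γ s - p) = log (c * (γ b - p)) - log (c * (γ a - p)) := by
  have hne : ∀ s ∈ uIcc a b, c ≠ 0 ∧ γ s - p ≠ 0 := fun s hs =>
    mul_ne_zero_iff.1 (slitPlane_ne_zero (hslit s hs))
  refine integral_eq_sub_of_hasDerivAt (f := fun s => log (c * (γ s - p))) (fun s hs => ?_)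
    (intervalIntegrable_deriv_div_sub hγ fun ⟨s, hs, h⟩ => (hne s hs).2 (sub_eq_zero.2 h))
  have := (((hγ.differentiable one_ne_zero s).hasDerivAt.sub_const p).const_mul c).clog_real
    (hslit s hs)
  rwa [mul_div_mul_left _ _ (hne s hs).1] at this

lemma I_mul_sub_mem_slitPlane {η : ℝ} {z μ : ℂ} (hz : |z.im| ≤ η * |z.re|)
    (hμ : η * |μ.re| < μ.im) : I * (z - μ) ∈ slitPlane := by
  rw [mem_slitPlane_iff]
  by_contra! h
  have hre : z.re = μ.re := by have := h.2; simp [sub_eq_zero] at this; linarith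
  rw [hre] at hz
  simp only [mul_re, I_re, sub_re, zero_mul, I_im, sub_im, one_mul, zero_sub] at h
  linarith [h.1, le_abs_self z.im]

lemma neg_I_mul_sub_mem_slitPlane {η : ℝ} {z μ : ℂ} (hz : |z.im| ≤ η * |z.re|)
    (hμ : η * |μ.re| < -μ.im) : -I * (z - μ) ∈ slitPlane := by
  rw [mem_slitPlane_iff]
  by_contra! h
  have hre : z.re = μ.re := by have := h.2; simp [sub_eq_zero] at this; linarith
  rw [hre] at hz
  simp only [neg_mul, neg_re, mul_re, I_re, sub_re, zero_mul, I_im, sub_im, one_mul, zero_sub,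
    neg_neg] at h
  linarith [h.1, neg_abs_le z.im]

lemma log_sub_log_neg_of_im_pos {x : ℂ} (hx : 0 < x.im) : log x - log (-x) = π * I := by
  rw [log, log, norm_neg, arg_neg_eq_arg_sub_pi_of_im_pos hx]
  push_cast
  ring

lemma log_sub_log_neg_of_im_neg {x : ℂ} (hx : x.im < 0) : log x - log (-x) = -(π * I) := by
  rw [log, log, norm_neg, arg_neg_eq_arg_add_pi_of_im_neg hx]
  push_cast
  ring

lemma im_div_ne_zero_of_not_collinear {a b c : ℂ} (h : ¬ Collinear ℝ ({a, b, c} : Set ℂ)) :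
    ((c - a) / (b - a)).im ≠ 0 := by
  intro him
  rcases eq_or_ne b a with rfl | hba
  · simp [collinear_pair] at h
  have hc : AffineMap.lineMap a b ((c - a) / (b - a)).re = c := by
    have : (((c - a) / (b - a)).re : ℂ) = (c - a) / (b - a) := Complex.ext rfl (by simp [him])
    rw [AffineMap.lineMap_apply, vsub_eq_sub, vadd_eq_add, Complex.real_smul, this,
      div_mul_cancel₀ _ (sub_ne_zero.2 hba), sub_add_cancel]
  have := collinear_insert_of_mem_affineSpan_pair (hc ▸ AffineMap.lineMap_mem_affineSpan_pair _ a b)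
  rw [Set.insert_comm, Set.pair_comm] at this
  exact h this

lemma eventually_cone_of_hasDerivAt_one {γ : ℝ → ℂ} (hγ0 : γ 0 = 0) (hγ' : HasDerivAt γ 1 0)
    {η : ℝ} (hη : 0 < η) {w : ℂ} (hw : η * |w.re| < w.im) :
    ∀ᶠ s in 𝓝 0, |(γ s).im| ≤ η * |(γ s).re| ∧
      (0 < s → 0 < (γ s).re ∧ η * |(w * γ s).re| < (w * γ s).im) ∧
      (s < 0 → (γ s).re < 0 ∧ η * |(w * γ s).re| < -(w * γ s).im) := by
  have hP : ∀ᶠ u in 𝓝 (1 : ℂ), |u.im| < η * u.re ∧ η * |(w * u).re| < (w * u).im :=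
    (ContinuousAt.eventually_lt (by fun_prop) (by fun_prop) (by simpa using hη)).and
      (ContinuousAt.eventually_lt (by fun_prop) (by fun_prop) (by simpa using hw))
  have hslope := eventually_nhdsWithin_iff.1 ((hasDerivAt_iff_tendsto_slope.1 hγ').eventually hP)
  filter_upwards [hslope] with s hs
  rcases eq_or_ne s 0 with rfl | hs0
  · simp [hγ0]
  obtain ⟨hcone, hside⟩ := hs hs0
  set u := slope γ 0 s
  have hγs : γ s = s * u := by
    simpa [hγ0, Complex.real_smul] using (sub_smul_slope γ 0 s).symm
  have hu : 0 < u.re := by nlinarith [abs_nonneg u.im]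
  have hwu : w * γ s = s * (w * u) := by rw [hγs]; ring
  rw [hwu]
  simp only [hγs, re_ofReal_mul, im_ofReal_mul, abs_mul, abs_of_pos hu]
  refine ⟨by nlinarith [abs_nonneg s], fun hs => ⟨by positivity, ?_⟩, fun hs => ⟨by nlinarith, ?_⟩⟩
  · rw [abs_of_pos hs]; nlinarith
  · rw [abs_of_neg hs]; nlinarith

lemma windingIntegral_eq_add_log_sub_log {γ : ℝ → ℂ} (hγ : ContDiff ℝ 1 γ) {a l u b : ℝ}
    {c μ : ℂ} (hnear : ∀ s ∈ uIcc l u, c * (γ s - μ) ∈ slitPlane)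
    (hleft : μ ∉ γ '' uIcc a l) (hright : μ ∉ γ '' uIcc u b) :
    windingIntegral γ a b μ = (∫ s in a..l, deriv γ s / (γ s - μ)) +
      (∫ s in u..b, deriv γ s / (γ s - μ)) + (log (c * (γ u - μ)) - log (c * (γ l - μ))) := by
  have hmid : μ ∉ γ '' uIcc l u := fun ⟨s, hs, h⟩ =>
    slitPlane_ne_zero (hnear s hs) (by rw [h, sub_self, mul_zero])
  have hint {x y : ℝ} (h : μ ∉ γ '' uIcc x y) := intervalIntegrable_deriv_div_sub hγ h
  rw [windingIntegral,
    ← integral_add_adjacent_intervals (hint hleft) ((hint hmid).trans (hint hright)),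
    ← integral_add_adjacent_intervals (hint hmid) (hint hright),
    integral_deriv_div_sub_eq_log_sub_log hγ hnear]
  ring

lemma tendsto_windingIntegral {γ : ℝ → ℂ} (hγ : ContDiff ℝ 1 γ) {a l u b : ℝ} (hal : a ≤ l)
    (hub : u ≤ b) (hleft : 0 ∉ γ '' Icc a l) (hright : 0 ∉ γ '' Icc u b) {c : ℂ}
    (hcl : c * γ l ∈ slitPlane) (hcu : c * γ u ∈ slitPlane) {α : Type*} {L : Filter α}
    {σ : α → ℂ} (hσ : Tendsto σ L (𝓝 0))
    (hnear : ∀ᶠ x in L, ∀ s ∈ uIcc l u, c * (γ s - σ x) ∈ slitPlane) :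
    Tendsto (fun x => windingIntegral γ a b (σ x)) L
      (𝓝 ((∫ s in a..l, deriv γ s / γ s) + (∫ s in u..b, deriv γ s / γ s) +
        (log (c * γ u) - log (c * γ l)))) := by
  have hopen {x y : ℝ} (h : 0 ∉ γ '' Icc x y) : (γ '' Icc x y)ᶜ ∈ 𝓝 0 :=
    (isCompact_Icc.image hγ.continuous).isClosed.compl_mem_nhds h
  have hcont {x y : ℝ} (hxy : x ≤ y) (h : 0 ∉ γ '' Icc x y) :
      ContinuousAt (fun μ => ∫ s in x..y, deriv γ s / (γ s - μ)) 0 :=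
    (continuousOn_integral_div_sub hxy (hγ.continuous_deriv le_rfl).continuousOn
      hγ.continuous.continuousOn).continuousAt (hopen h)
  have hlog : ContinuousAt (fun μ => log (c * (γ u - μ)) - log (c * (γ l - μ))) 0 := by
    refine ((continuousAt_clog ?_).comp ?_).sub ((continuousAt_clog ?_).comp ?_) <;>
      first | simpa | fun_prop
  have heq : ∀ᶠ x in L, windingIntegral γ a b (σ x) =
      (∫ s in a..l, deriv γ s / (γ s - σ x)) + (∫ s in u..b, deriv γ s / (γ s - σ x)) +
        (log (c * (γ u - σ x)) - log (c * (γ l - σ x))) := by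
    filter_upwards [hnear, hσ.eventually (hopen hleft), hσ.eventually (hopen hright)]
      with x hx hxl hxr
    rw [← uIcc_of_le hal] at hxl
    rw [← uIcc_of_le hub] at hxr
    exact windingIntegral_eq_add_log_sub_log hγ hx hxl hxr
  refine Tendsto.congr' (EventuallyEq.symm heq) ?_
  simpa only [Pi.add_apply, Function.comp_def, sub_zero] using
    (((hcont hal hleft).add (hcont hub hright)).add hlog).tendsto.comp hσ

theorem tendsto_windingIntegral_sub {γ : ℝ → ℂ} (hγ : ContDiff ℝ 1 γ) (hγ0 : γ 0 = 0)
    (hγ' : deriv γ 0 = 1) {a b : ℝ} (ha : a < 0) (hb : 0 < b)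
    (hzero : ∀ s ∈ Icc a b, γ s = 0 → s = 0) {w : ℂ} (hw : 0 < w.im) :
    Tendsto (fun t => windingIntegral γ a b (w * γ t) - windingIntegral γ a b (w * γ (-t)))
      (𝓝[>] 0) (𝓝 (2 * π * I)) := by
  obtain ⟨η, hη, hηw⟩ : ∃ η : ℝ, 0 < η ∧ η * |w.re| < w.im := ⟨w.im / (|w.re| + 1),
    by positivity, by
      rw [div_mul_eq_mul_div, div_lt_iff₀ (by positivity)]
      nlinarith [abs_nonneg w.re]⟩
  have hderiv : HasDerivAt γ 1 0 := hγ' ▸ (hγ.differentiable one_ne_zero 0).hasDerivAt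
  obtain ⟨l', u', ⟨hl', hu'⟩, hsub⟩ := mem_nhds_iff_exists_Ioo_subset.1
    ((eventually_cone_of_hasDerivAt_one hγ0 hderiv hη hηw).and (Ioo_mem_nhds ha hb))
  obtain ⟨l, hll, hl⟩ := exists_between hl'
  obtain ⟨u, hu, huu⟩ := exists_between hu'
  have hQ := fun s (hs : s ∈ Icc l u) => hsub ⟨hll.trans_le hs.1, hs.2.trans_lt huu⟩
  have hfar {x y : ℝ} (hxy : Icc x y ⊆ Icc a b) (h0 : (0 : ℝ) ∉ Icc x y) : 0 ∉ γ '' Icc x y :=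
    fun ⟨s, hs, h⟩ => h0 (hzero s (hxy hs) h ▸ hs)
  have hleft : 0 ∉ γ '' Icc a l :=
    hfar (Icc_subset_Icc le_rfl (hQ l ⟨le_rfl, by linarith⟩).2.2.le) fun h => by linarith [h.2]
  have hright : 0 ∉ γ '' Icc u b :=
    hfar (Icc_subset_Icc (hQ u ⟨by linarith, le_rfl⟩).2.1.le le_rfl) fun h => by linarith [h.1]
  have hγl : (γ l).re < 0 := ((hQ l ⟨le_rfl, (hl.trans hu).le⟩).1.2.2 hl).1
  have hγu : 0 < (γ u).re := ((hQ u ⟨(hl.trans hu).le, le_rfl⟩).1.2.1 hu).1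
  have hal : a ≤ l := (hQ l ⟨le_rfl, (hl.trans hu).le⟩).2.1.le
  have hub : u ≤ b := (hQ u ⟨(hl.trans hu).le, le_rfl⟩).2.2.le
  have hcone : ∀ s ∈ uIcc l u, |(γ s).im| ≤ η * |(γ s).re| := fun s hs =>
    (hQ s (uIcc_of_le (hl.trans hu).le ▸ hs)).1.1
  have hγc := hγ.continuous
  have hσpos : Tendsto (fun t => w * γ t) (𝓝[>] 0) (𝓝 0) :=
    ((by fun_prop : Continuous fun t => w * γ t).tendsto' 0 0 (by simp [hγ0])).mono_left
      nhdsWithin_le_nhds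
  have hσneg : Tendsto (fun t => w * γ (-t)) (𝓝[>] 0) (𝓝 0) :=
    ((by fun_prop : Continuous fun t => w * γ (-t)).tendsto' 0 0 (by simp [hγ0])).mono_left
      nhdsWithin_le_nhds
  have hpos := tendsto_windingIntegral hγ hal hub hleft hright (c := I)
    (by simp [mem_slitPlane_iff, hγl.ne]) (by simp [mem_slitPlane_iff, hγu.ne']) hσpos (by
      filter_upwards [Ioo_mem_nhdsGT hu] with t ht
      exact fun s hs => I_mul_sub_mem_slitPlane (hcone s hs)
        ((hQ t ⟨hl.le.trans ht.1.le, ht.2.le⟩).1.2.1 ht.1).2)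
  have hneg := tendsto_windingIntegral hγ hal hub hleft hright (c := -I)
    (by simp [mem_slitPlane_iff, hγl.ne]) (by simp [mem_slitPlane_iff, hγu.ne']) hσneg (by
      filter_upwards [Ioo_mem_nhdsGT (neg_pos.2 hl)] with t ht
      exact fun s hs => neg_I_mul_sub_mem_slitPlane (hcone s hs)
        ((hQ (-t) ⟨by linarith [ht.2], by linarith [ht.1]⟩).1.2.2 (by linarith [ht.1])).2)
  convert hpos.sub hneg using 2
  have epos := log_sub_log_neg_of_im_pos (x := I * γ u) (by simpa using hγu)
  have eneg := log_sub_log_neg_of_im_neg (x := I * γ l) (by simpa using hγl)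
  rw [neg_mul, neg_mul]
  linear_combination eneg - epos

theorem exists_mul_mem_range {γ : ℝ → ℂ} (hγ : ContDiff ℝ 1 γ) (hper : Function.Periodic γ 1)
    (hzero : ∀ s, γ s = 0 → ∃ n : ℤ, s = n) (hγ0 : γ 0 = 0) (hγ' : deriv γ 0 = 1) {w : ℂ}
    (hw : 0 < w.im) : ∃ τ, γ τ ≠ 0 ∧ w * γ τ ∈ range γ := by
  by_contra! h
  set W := windingIntegral γ (-(1 / 2)) (1 / 2)
  have hzero' : ∀ s ∈ Ioo (-1 : ℝ) 1, γ s = 0 → s = 0 := fun s hs h0 => by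
    obtain ⟨n, rfl⟩ := hzero s h0
    have : (-1 : ℤ) < n ∧ n < 1 := ⟨by exact_mod_cast hs.1, by exact_mod_cast hs.2⟩
    simp [show n = 0 by omega]
  have hoff : ∀ τ ∈ Ioo (0 : ℝ) 1, w * γ τ ∉ range γ := fun τ hτ =>
    h τ fun h0 => hτ.1.ne' (hzero' τ ⟨by linarith [hτ.1], hτ.2⟩ h0)
  have hends : γ (-(1 / 2)) = γ (1 / 2) := by
    have := hper (-(1 / 2))
    norm_num at this
    exact this.symm
  have hγc := hγ.continuous
  have hW : ContinuousOn W (range γ)ᶜ :=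
    (continuousOn_integral_div_sub (by norm_num) (hγ.continuous_deriv le_rfl).continuousOn
      hγc.continuousOn).mono (compl_subset_compl.2 (image_subset_range _ _))
  have hsymm : ∀ t ∈ Ioo (0 : ℝ) (1 / 2), W (w * γ t) - W (w * γ (-t)) = 0 := by
    intro t ht
    have hsub : Icc t (1 - t) ⊆ Ioo 0 1 := Icc_subset_Ioo ht.1 (by linarith [ht.1])
    rw [show γ (-t) = γ (1 - t) by simpa [neg_add_eq_sub] using (hper (-t)).symm, sub_eq_zero]
    refine isPreconnected_Icc.constant_of_mapsTo (T := (AddSubgroup.zmultiples (2 * π * I) : Set ℂ))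
      (isDiscrete_iff_discreteTopology.2 (NormedSpace.discreteTopology_zmultiples _))
      (f := fun τ => W (w * γ τ))
      (hW.comp (by fun_prop) fun τ hτ => hoff τ (hsub hτ))
      (fun τ hτ => windingIntegral_mem_zmultiples hγ hends (hoff τ (hsub hτ)))
      (left_mem_Icc.2 (by linarith [ht.2])) (right_mem_Icc.2 (by linarith [ht.2]))
  have hlim := tendsto_windingIntegral_sub hγ hγ0 hγ' (a := -(1 / 2)) (b := 1 / 2) (by norm_num)
    (by norm_num) (fun s hs => hzero' s ⟨by linarith [hs.1], by linarith [hs.2]⟩) hw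
  have hev : ∀ᶠ t in 𝓝[>] 0, 0 = W (w * γ t) - W (w * γ (-t)) :=
    Filter.eventually_of_mem (Ioo_mem_nhdsGT (by norm_num)) fun t ht => (hsymm t ht).symm
  exact two_pi_I_ne_zero (tendsto_nhds_unique hlim (tendsto_const_nhds.congr' hev))

theorem exists_div_eq_of_im_pos {γ : ℝ → ℂ} (hγ : ContDiff ℝ 1 γ) (hper : Function.Periodic γ 1)
    (hinj : ∀ s t : ℝ, γ s = γ t → ∃ n : ℤ, t = s + n) (hder : deriv γ 0 ≠ 0) {w : ℂ}
    (hw : 0 < w.im) :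
    ∃ p q r : ℂ, p ∈ range γ ∧ q ∈ range γ ∧ r ∈ range γ ∧ p ≠ q ∧ p ≠ r ∧ q ≠ r ∧
      (r - p) / (q - p) = w := by
  set ζ : ℝ → ℂ := fun s => (γ s - γ 0) / deriv γ 0
  have hγζ : ∀ s, γ s - γ 0 = deriv γ 0 * ζ s := fun s => by
    simp only [ζ]
    field_simp
  obtain ⟨τ, hτ, σ, hσ⟩ := exists_mul_mem_range (γ := ζ) ((hγ.sub contDiff_const).div_const _)
    (fun s => by simp [ζ, hper s])
    (fun s hs => by simpa using hinj 0 s (Eq.symm (by simpa [ζ, hder, sub_eq_zero] using hs)))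
    (by simp [ζ]) (by simp [ζ, hder]) hw
  have hw0 : w ≠ 0 := by rintro rfl; simp at hw
  have hw1 : w ≠ 1 := by rintro rfl; simp at hw
  refine ⟨γ 0, γ τ, γ σ, mem_range_self _, mem_range_self _, mem_range_self _, ?_, ?_, ?_, ?_⟩
  · rw [ne_comm, ← sub_ne_zero, hγζ]
    exact mul_ne_zero hder hτ
  · rw [ne_comm, ← sub_ne_zero, hγζ, hσ]
    exact mul_ne_zero hder (mul_ne_zero hw0 hτ)
  · rw [ne_comm, ← sub_ne_zero, ← sub_sub_sub_cancel_right _ _ (γ 0), hγζ, hγζ, hσ]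
    exact fun h => hw1 (by simpa [hder, hτ, sub_eq_zero] using h)
  · rw [hγζ, hγζ, hσ]
    field_simp [hder, hτ]

lemma im_inv_pos_of_im_neg {w : ℂ} (hw : w.im < 0) : 0 < w⁻¹.im := by
  rw [inv_im]
  exact div_pos (neg_pos.2 hw) (normSq_pos.2 fun h => by simp [h] at hw)

theorem inscribed_similar_triangle_general (C : Set ℂ)
    (hC : ∃ γ : ℝ → ℂ, ContDiff ℝ 1 γ ∧ Function.Periodic γ 1 ∧
      (∀ s t : ℝ, γ s = γ t → ∃ n : ℤ, t = s + n) ∧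
      (∀ s, deriv γ s ≠ 0) ∧ C = Set.range γ)
    (a b c : ℂ)
    (hncol : ¬ Collinear ℝ ({a, b, c} : Set ℂ)) :
    ∃ a' b' c' : ℂ, a' ∈ C ∧ b' ∈ C ∧ c' ∈ C ∧
      a' ≠ b' ∧ a' ≠ c' ∧ b' ≠ c' ∧
      (c' - a') / (b' - a') = (c - a) / (b - a) := by
  obtain ⟨γ, hγ, hper, hinj, hder, rfl⟩ := hC
  rcases (im_div_ne_zero_of_not_collinear hncol).lt_or_gt with hneg | hpos
  · obtain ⟨p, q, r, hp, hq, hr, hpq, hpr, hqr, hw⟩ :=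
      exists_div_eq_of_im_pos hγ hper hinj (hder 0) (im_inv_pos_of_im_neg hneg)
    exact ⟨p, r, q, hp, hr, hq, hpr, hpq, hqr.symm, by rw [← inv_div, hw, inv_inv]⟩
  · exact exists_div_eq_of_im_pos hγ hper hinj (hder 0) hpos

/-- Every smooth simple closed curve `C ⊂ ℂ` inscribes a triangle directly
similar to any given nondegenerate triangle `abc`: there are pairwise distinct
points `a', b', c' ∈ C` with `(c' − a')/(b' − a') = (c − a)/(b − a)`. -/
theorem inscribed_similar_triangle (C : Set ℂ)
    (hC : ∃ γ : ℝ → ℂ, ContDiff ℝ 1 γ ∧ Function.Periodic γ 1 ∧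
      (∀ s t : ℝ, γ s = γ t → ∃ n : ℤ, t = s + n) ∧
      (∀ s, deriv γ s ≠ 0) ∧ C = Set.range γ)
    (a b c : ℂ) (hab : a ≠ b) (hac : a ≠ c) (hbc : b ≠ c)
    (hncol : ¬ Collinear ℝ ({a, b, c} : Set ℂ)) :
    ∃ a' b' c' : ℂ, a' ∈ C ∧ b' ∈ C ∧ c' ∈ C ∧
      a' ≠ b' ∧ a' ≠ c' ∧ b' ≠ c' ∧
      (c' - a') / (b' - a') = (c - a) / (b - a) :=
  inscribed_similar_triangle_general C hC a b c hncol
end
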